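/- (Gauge invariance of the QAOA cost expectation.) For every Hermitian operator H on the n-qubit state space, every depth p ≥ 1, all parameter vectors γ, β ∈ ℝ^p, and every bitstring y ∈ {0,1}^n, the expectation value of the gauge-transformed Hamiltonian in the gauge-transformed QAOA output state equals the expectation value of the original Hamiltonian in the original QAOA output state: ⟨s| U(H^y; γ, β)† H^y U(H^y; γ, β) |s⟩ = ⟨s| U(H; γ, β)† H U(H; γ, β) |s⟩, where H^y = P_y H P_y and |s⟩ = |+⟩^{⊗n}. -/

import Mathlib

open Matrix

/-- The computational basis state `|x⟩` on `n` qubits. -/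
def ket {n : ℕ} (x : Fin n → Bool) : (Fin n → Bool) → ℂ :=
  fun z => if z = x then 1 else 0

/-- The Pauli `X` operator on qubit `j`, sending `|x⟩` to `|x ⊕ e_j⟩`. -/
def PauliX {n : ℕ} (j : Fin n) : Matrix (Fin n → Bool) (Fin n → Bool) ℂ :=
  fun a b => if a = (fun i => xor (b i) (if i = j then true else false)) then 1 else 0

/-- The bitflip operator `P_y`, the linear map sending `|x⟩` to `|x ⊕ y⟩`. -/
def bitflip {n : ℕ} (y : Fin n → Bool) : Matrix (Fin n → Bool) (Fin n → Bool) ℂ :=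
  fun a b => if a = (fun i => xor (b i) (y i)) then 1 else 0

/-- The uniform superposition state `|s⟩ = |+⟩^{⊗n} = 2^{-n/2} Σ_{x ∈ {0,1}^n} |x⟩`. -/
noncomputable def uniformState (n : ℕ) : (Fin n → Bool) → ℂ :=
  ((Real.sqrt 2 : ℂ) ^ n)⁻¹ • ∑ x : Fin n → Bool, ket x

/-- The QAOA phase separator `U_P(H; γ) = exp(-iγH)`. -/
noncomputable def phaseSep {n : ℕ} (H : Matrix (Fin n → Bool) (Fin n → Bool) ℂ) (γ : ℝ) :
    Matrix (Fin n → Bool) (Fin n → Bool) ℂ :=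
  NormedSpace.exp ((-(Complex.I * (γ : ℂ))) • H)

/-- The QAOA mixer `U_M(β) = exp(-iβ Σ_j X_j)`. -/
noncomputable def mixer (n : ℕ) (β : ℝ) : Matrix (Fin n → Bool) (Fin n → Bool) ℂ :=
  NormedSpace.exp ((-(Complex.I * (β : ℂ))) • ∑ j : Fin n, PauliX j)

/-- The depth-`p` QAOA circuit `U(H; γ, β) = ∏_{l=p}^{1} U_M(β_l) U_P(H; γ_l)`,
with the `l = 1` layer acting first (i.e. appearing rightmost in the product). -/
noncomputable def qaoaCircuit {n : ℕ} (H : Matrix (Fin n → Bool) (Fin n → Bool) ℂ)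
    (p : ℕ) (γ β : Fin p → ℝ) : Matrix (Fin n → Bool) (Fin n → Bool) ℂ :=
  ((List.ofFn (fun l : Fin p => mixer n (β l) * phaseSep H (γ l))).reverse).prod


/-! The bitflip `P_y` is a self-inverse unitary permutation matrix. It commutes with every `X_j`,
hence with the mixer, fixes `|s⟩`, and intertwines `exp(-iγH)` with `exp(-iγ P_y H P_y)`. So
`U(H^y) P_y = P_y U(H)`, the gauged output state is `P_y U(H)|s⟩`, and the expectation of
`H^y = P_y H P_y` in it is that of `H` in `U(H)|s⟩`. -/

theorem SemiconjBy.list_prod {M : Type*} [Monoid M] {a : M} {l₁ l₂ : List M}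
    (h : List.Forall₂ (SemiconjBy a) l₁ l₂) : SemiconjBy a l₁.prod l₂.prod := by
  induction h with
  | nil => exact SemiconjBy.one_right a
  | cons hx _ ih => exact hx.mul_right ih

theorem SemiconjBy.mul_mul_of_mul_self_eq_one {M : Type*} [Monoid M] {a : M} (ha : a * a = 1)
    (x : M) : SemiconjBy a x (a * x * a) := by
  rw [SemiconjBy, mul_assoc _ a a, ha, mul_one]

theorem Matrix.star_mulVec_dotProduct_mulVec_of_mem_unitaryGroup {m α : Type*} [Fintype m]
    [DecidableEq m] [CommRing α] [StarRing α] {U : Matrix m m α}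
    (hU : U ∈ Matrix.unitaryGroup m α) (v w : m → α) :
    star (U *ᵥ v) ⬝ᵥ (U *ᵥ w) = star v ⬝ᵥ w := by
  rw [star_mulVec, ← dotProduct_mulVec, mulVec_mulVec, ← star_eq_conjTranspose,
    Unitary.star_mul_self_of_mem hU, one_mulVec]

section Bitflip

variable {n : ℕ}

theorem eq_xor_iff_eq_xor (a b y : Fin n → Bool) :
    (a = fun i => xor (b i) (y i)) ↔ b = fun i => xor (a i) (y i) := by
  constructor <;> (rintro rfl; funext i; simp)

theorem bitflip_mulVec (y : Fin n → Bool) (v : (Fin n → Bool) → ℂ) :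
    bitflip y *ᵥ v = fun a => v (fun i => xor (a i) (y i)) := by
  funext a
  simp only [mulVec, dotProduct, bitflip, ite_mul, one_mul, zero_mul, eq_xor_iff_eq_xor a,
    Finset.sum_ite_eq', Finset.mem_univ, if_true]

theorem bitflip_mul_bitflip (y z : Fin n → Bool) :
    bitflip y * bitflip z = bitflip (fun i => xor (y i) (z i)) := by
  refine ext_iff_mulVec.2 fun v => ?_
  simp only [← mulVec_mulVec, bitflip_mulVec, Bool.xor_assoc]

theorem bitflip_false : bitflip (fun _ : Fin n => false) = 1 := by
  refine ext_iff_mulVec.2 fun v => ?_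
  simp only [bitflip_mulVec, Bool.xor_false, one_mulVec]

theorem bitflip_mul_self (y : Fin n → Bool) : bitflip y * bitflip y = 1 := by
  simp [bitflip_mul_bitflip, bitflip_false]

theorem bitflip_conjTranspose (y : Fin n → Bool) : (bitflip y)ᴴ = bitflip y := by
  ext a b
  simp only [conjTranspose_apply, bitflip, eq_xor_iff_eq_xor b, apply_ite star, star_one,
    star_zero]

theorem bitflip_mem_unitaryGroup (y : Fin n → Bool) :
    bitflip y ∈ unitaryGroup (Fin n → Bool) ℂ := by
  rw [mem_unitaryGroup_iff, star_eq_conjTranspose, bitflip_conjTranspose, bitflip_mul_self]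

theorem commute_bitflip (y z : Fin n → Bool) : Commute (bitflip y) (bitflip z) := by
  simp only [Commute, SemiconjBy, bitflip_mul_bitflip, Bool.xor_comm]

theorem uniformState_apply (x : Fin n → Bool) :
    uniformState n x = ((Real.sqrt 2 : ℂ) ^ n)⁻¹ := by
  simp [uniformState, ket]

theorem bitflip_mulVec_uniformState (y : Fin n → Bool) :
    bitflip y *ᵥ uniformState n = uniformState n := by
  rw [bitflip_mulVec]
  funext a
  simp only [uniformState_apply]

-- `NormedSpace.exp` does not depend on the norm, so any Banach-algebra norm on matrices serves
-- to invoke the exponential lemmas.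
theorem commute_bitflip_mixer (y : Fin n → Bool) (β : ℝ) :
    Commute (bitflip y) (mixer n β) := by
  open scoped Norms.Operator in
  exact ((Commute.sum_right _ _ _ fun j _ => commute_bitflip y _).smul_right _).exp_right

theorem semiconjBy_bitflip_phaseSep (y : Fin n → Bool)
    (H : Matrix (Fin n → Bool) (Fin n → Bool) ℂ) (γ : ℝ) :
    SemiconjBy (bitflip y) (phaseSep H γ) (phaseSep (bitflip y * H * bitflip y) γ) := by
  open scoped Norms.Operator in
  exact ((SemiconjBy.mul_mul_of_mul_self_eq_one (bitflip_mul_self y) H).smul_right _).exp_right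

theorem semiconjBy_bitflip_qaoaCircuit (y : Fin n → Bool)
    (H : Matrix (Fin n → Bool) (Fin n → Bool) ℂ) (p : ℕ) (γ β : Fin p → ℝ) :
    SemiconjBy (bitflip y) (qaoaCircuit H p γ β)
      (qaoaCircuit (bitflip y * H * bitflip y) p γ β) := by
  refine SemiconjBy.list_prod ?_
  rw [List.forall₂_reverse_iff, List.ofFn_eq_map, List.ofFn_eq_map, List.forall₂_map_left_iff,
    List.forall₂_map_right_iff, List.forall₂_same]
  exact fun l _ =>
    SemiconjBy.mul_right (commute_bitflip_mixer y (β l)) (semiconjBy_bitflip_phaseSep y H (γ l))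

end Bitflip

theorem qaoa_expectation_gauge_general {n : ℕ} (H : Matrix (Fin n → Bool) (Fin n → Bool) ℂ)
    (p : ℕ) (γ β : Fin p → ℝ) (y : Fin n → Bool) :
    star (qaoaCircuit (bitflip y * H * bitflip y) p γ β *ᵥ uniformState n) ⬝ᵥ
        ((bitflip y * H * bitflip y) *ᵥ
          (qaoaCircuit (bitflip y * H * bitflip y) p γ β *ᵥ uniformState n)) =
      star (qaoaCircuit H p γ β *ᵥ uniformState n) ⬝ᵥ
        (H *ᵥ (qaoaCircuit H p γ β *ᵥ uniformState n)) := by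
  set P := bitflip y
  set U := qaoaCircuit H p γ β
  have hstate :
      qaoaCircuit (P * H * P) p γ β *ᵥ uniformState n = P *ᵥ (U *ᵥ uniformState n) := by
    conv_lhs => rw [← bitflip_mulVec_uniformState y]
    rw [mulVec_mulVec, ← (semiconjBy_bitflip_qaoaCircuit y H p γ β).eq, mulVec_mulVec]
  have hcost (w) : (P * H * P) *ᵥ (P *ᵥ w) = P *ᵥ (H *ᵥ w) := by
    rw [mulVec_mulVec, mul_assoc, mul_assoc, bitflip_mul_self, mul_one, mulVec_mulVec]
  rw [hstate, hcost, star_mulVec_dotProduct_mulVec_of_mem_unitaryGroup (bitflip_mem_unitaryGroup y)]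

/-- Gauge invariance of the QAOA cost expectation: for Hermitian `H` and `H^y = P_y H P_y`,
`⟨s| U(H^y)† H^y U(H^y) |s⟩ = ⟨s| U(H)† H U(H) |s⟩`. -/
theorem qaoa_expectation_gauge {n : ℕ} (H : Matrix (Fin n → Bool) (Fin n → Bool) ℂ)
    (hH : Hᴴ = H) (p : ℕ) (hp : 1 ≤ p) (γ β : Fin p → ℝ) (y : Fin n → Bool) :
    star (qaoaCircuit (bitflip y * H * bitflip y) p γ β *ᵥ uniformState n) ⬝ᵥ
        ((bitflip y * H * bitflip y) *ᵥ
          (qaoaCircuit (bitflip y * H * bitflip y) p γ β *ᵥ uniformState n)) =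
      star (qaoaCircuit H p γ β *ᵥ uniformState n) ⬝ᵥ
        (H *ᵥ (qaoaCircuit H p γ β *ᵥ uniformState n)) :=
  qaoa_expectation_gauge_general H p γ β y
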